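/- If a digraph G contains two connected components A and B that are not isomorphic but are switching adjacent (B is isomorphic to a switching of A about one of its vertices), then G is reconstructible from its deck: any digraph H with the same deck as G is isomorphic to G. -/

import Mathlib

/-- A digraph on a vertex type `V`: a set of ordered pairs of vertices,
given by its adjacency relation. -/
structure Dgraph (V : Type*) where
  Adj : V → V → Prop

namespace Dgraph

variable {V W : Type*}

/-- Switching at a vertex `v`: every edge incident with `v` is reversed. -/
def switchV (G : Dgraph V) (v : V) : Dgraph V :=
  ⟨fun a b => ((a = v ∨ b = v) ∧ G.Adj b a) ∨ (¬(a = v ∨ b = v) ∧ G.Adj a b)⟩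

/-- Switching about a set `S`: every edge with exactly one endpoint in `S` is reversed. -/
def switchSet (G : Dgraph V) (S : Set V) : Dgraph V :=
  ⟨fun a b => (((a ∈ S) ↔ (b ∈ S)) ∧ G.Adj a b) ∨ (¬((a ∈ S) ↔ (b ∈ S)) ∧ G.Adj b a)⟩

/-- Relabelling of a digraph by a permutation: `(γ a, γ b)` is an edge of `G.relabel γ`
whenever `(a,b)` is an edge of `G`. -/
def relabel (G : Dgraph V) (γ : Equiv.Perm V) : Dgraph V :=
  ⟨fun a b => G.Adj (γ.symm a) (γ.symm b)⟩

/-- Isomorphism of digraphs (possibly on different vertex types). -/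
def DIso (G : Dgraph V) (H : Dgraph W) : Prop :=
  ∃ e : V ≃ W, ∀ a b, G.Adj a b ↔ H.Adj (e a) (e b)

/-- An oriented graph: a digraph with no loops and no pair of opposite edges. -/
def IsOriented (G : Dgraph V) : Prop := ∀ a b, G.Adj a b → ¬ G.Adj b a

/-- The underlying undirected (simple) graph of a digraph. -/
def underlying (G : Dgraph V) : SimpleGraph V where
  Adj a b := a ≠ b ∧ (G.Adj a b ∨ G.Adj b a)
  symm := ⟨fun a b ⟨h1, h2⟩ => ⟨h1.symm, h2.symm⟩⟩
  loopless := ⟨fun a ⟨h1, _⟩ => h1 rfl⟩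

/-- The vertex set of the connected component (of the underlying graph) containing `v`. -/
def compSet (G : Dgraph V) (v : V) : Set V := {x | (underlying G).Reachable v x}

/-- The induced subdigraph on a set of vertices. -/
def induce (G : Dgraph V) (S : Set V) : Dgraph S := ⟨fun a b => G.Adj a b⟩

/-- A digraph is switching-stable if each vertex switching is isomorphic to it. -/
def SwitchStable (G : Dgraph V) : Prop := ∀ v, DIso (G.switchV v) G

/-- Isomorphism as a setoid on digraphs with a fixed vertex type. -/
def isoSetoid (V : Type*) : Setoid (Dgraph V) where
  r := DIso
  iseqv := by
    refine ⟨fun G => ⟨Equiv.refl V, fun a b => Iff.rfl⟩, ?_, ?_⟩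
    · rintro G H ⟨e, h⟩
      exact ⟨e.symm, fun a b => by simpa using (h (e.symm a) (e.symm b)).symm⟩
    · rintro G H K ⟨e, h⟩ ⟨f, h2⟩
      exact ⟨e.trans f, fun a b => (h a b).trans (h2 _ _)⟩

/-- The switching deck: the multiset of isomorphism classes of vertex switchings. -/
def deck (G : Dgraph V) [Fintype V] : Multiset (Quotient (isoSetoid V)) :=
  Finset.univ.val.map fun v => Quotient.mk (isoSetoid V) (G.switchV v)

/-- The `t`-deck: the deck augmented by `t` copies of the isomorphism class of `G`. -/
def tdeck (G : Dgraph V) [Fintype V] (t : ℕ) : Multiset (Quotient (isoSetoid V)) :=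
  Multiset.replicate t (Quotient.mk (isoSetoid V) G) + G.deck

end Dgraph

/-!
Let `A ∋ a` and `B ∋ b` be the two components, with `A` switched at `a` isomorphic to `B`; then
`B` switched at the image `b` of `a` is isomorphic to `A`. Since `G_a` and `G_b` lie in the deck of
`H`, we get `H ≅ (G_a)_z ≅ (G_b)_z'` for some `z`, `z'`. Switching at a vertex only replaces its
component `C` by `C` switched at that vertex, so counting the vertices whose component is isomorphic
to `A`, and then to `B`, in both descriptions of `H` shows that the component `D` of `z` in `G_a`
satisfies `D ≅ B` and `D_z ≅ A`. Hence `(G_a)_z` arises from `G` either by replacing `A` with a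
copy of itself (when `z ∈ A`) or by exchanging a copy of `A` with a copy of `B`.
-/

namespace Dgraph

variable {V W U U' : Type*}

theorem ext {G H : Dgraph V} (h : ∀ a b, G.Adj a b ↔ H.Adj a b) : G = H := by
  cases G; cases H
  congr
  funext a b
  exact propext (h a b)

theorem DIso.refl (G : Dgraph V) : DIso G G := ⟨Equiv.refl V, fun _ _ => Iff.rfl⟩

theorem DIso.symm {G : Dgraph V} {H : Dgraph W} (h : DIso G H) : DIso H G := by
  obtain ⟨e, he⟩ := h
  exact ⟨e.symm, fun a b => by simpa using (he (e.symm a) (e.symm b)).symm⟩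

theorem DIso.trans {G : Dgraph V} {H : Dgraph W} {K : Dgraph U}
    (h : DIso G H) (h' : DIso H K) : DIso G K := by
  obtain ⟨e, he⟩ := h
  obtain ⟨f, hf⟩ := h'
  exact ⟨e.trans f, fun a b => (he a b).trans (hf _ _)⟩

instance {V W U : Type*} : Trans (@DIso V W) (@DIso W U) (@DIso V U) := ⟨DIso.trans⟩

theorem DIso.card_eq {G : Dgraph V} {H : Dgraph W} (h : DIso G H) :
    Nat.card V = Nat.card W :=
  let ⟨e, _⟩ := h
  Nat.card_congr e

theorem switchV_adj_of_ne {G : Dgraph V} {v p q : V} (hp : p ≠ v) (hq : q ≠ v) :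
    (G.switchV v).Adj p q ↔ G.Adj p q := by
  simp [switchV, hp, hq]

@[simp]
theorem switchV_switchV (G : Dgraph V) (v : V) : (G.switchV v).switchV v = G :=
  ext fun a b => by by_cases h : a = v ∨ b = v <;> simp [switchV, h] <;> tauto

theorem diso_switchV_of_equiv {G : Dgraph V} {H : Dgraph W} (e : V ≃ W)
    (he : ∀ a b, G.Adj a b ↔ H.Adj (e a) (e b)) (v : V) :
    DIso (G.switchV v) (H.switchV (e v)) :=
  ⟨e, fun a b => by simp only [switchV, e.apply_eq_iff_eq, he]⟩

theorem exists_switchV_diso_of_switchV_diso {G : Dgraph V} {H : Dgraph W} {v : V}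
    (h : DIso (G.switchV v) H) : ∃ w, DIso (H.switchV w) G := by
  obtain ⟨e, he⟩ := h
  exact ⟨e v, by simpa using (diso_switchV_of_equiv e he v).symm⟩

@[simp]
theorem underlying_switchV (G : Dgraph V) (v : V) :
    (G.switchV v).underlying = G.underlying := by
  ext a b
  by_cases h : a = v ∨ b = v <;> simp [underlying, switchV, h] <;> tauto

@[simp]
theorem compSet_switchV (G : Dgraph V) (v x : V) : (G.switchV v).compSet x = G.compSet x := by
  simp only [compSet, underlying_switchV]

theorem card_compSet_switchV (G : Dgraph V) (v x : V) :
    Nat.card ((G.switchV v).compSet x) = Nat.card (G.compSet x) := by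
  rw [compSet_switchV]

theorem mem_compSet_self (G : Dgraph V) (x : V) : x ∈ G.compSet x :=
  SimpleGraph.Reachable.refl x

theorem compSet_eq_of_mem {G : Dgraph V} {x y : V} (h : y ∈ G.compSet x) :
    G.compSet y = G.compSet x :=
  Set.ext fun _ => ⟨fun hz => h.trans hz, fun hz => h.symm.trans hz⟩

theorem disjoint_compSet {G : Dgraph V} {x y : V} (h : y ∉ G.compSet x) :
    Disjoint (G.compSet x) (G.compSet y) :=
  Set.disjoint_left.mpr fun _ hx hy => h (hx.trans hy.symm)

def IsUnionOfComponents (G : Dgraph V) (S : Set V) : Prop :=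
  ∀ p q, G.Adj p q → (p ∈ S ↔ q ∈ S)

theorem isUnionOfComponents_compSet (G : Dgraph V) (x : V) :
    G.IsUnionOfComponents (G.compSet x) := by
  intro p q hpq
  by_cases h : p = q
  · rw [h]
  · have hr : G.underlying.Reachable p q := SimpleGraph.Adj.reachable ⟨h, Or.inl hpq⟩
    exact ⟨fun hp => hp.trans hr, fun hq => hq.trans hr.symm⟩

def component (G : Dgraph V) (v : V) : Dgraph (G.compSet v) := G.induce (G.compSet v)

def switchedComponent (G : Dgraph V) (v : V) : Dgraph (G.compSet v) :=
  (G.component v).switchV ⟨v, G.mem_compSet_self v⟩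

theorem component_diso_of_equiv {G : Dgraph V} {H : Dgraph W} (e : V ≃ W)
    (he : ∀ a b, G.Adj a b ↔ H.Adj (e a) (e b)) (x : V) :
    DIso (G.component x) (H.component (e x)) := by
  let φ : G.underlying ≃g H.underlying := ⟨e, by simp [underlying, he, e.injective.eq_iff]⟩
  exact ⟨e.subtypeEquiv fun _ => φ.reachable_iff.symm, fun a b => he a b⟩

theorem induce_diso_induce {G H : Dgraph V} {S T : Set V} (hST : S = T)
    (h : ∀ p ∈ S, ∀ q ∈ S, G.Adj p q ↔ H.Adj p q) : DIso (G.induce S) (H.induce T) := by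
  subst hST
  exact ⟨Equiv.refl _, fun p q => h p p.2 q q.2⟩

theorem induce_switchV_diso_of_eq (G : Dgraph V) {S T : Set V} (hST : S = T) {x : V}
    (hS : x ∈ S) (hT : x ∈ T) :
    DIso ((G.induce S).switchV ⟨x, hS⟩) ((G.induce T).switchV ⟨x, hT⟩) := by
  subst hST
  exact DIso.refl _

theorem induce_induce_diso (G : Dgraph V) (S T : Set V) :
    DIso ((G.induce S).induce (Subtype.val ⁻¹' T)) (G.induce (S ∩ T)) :=
  ⟨Equiv.subtypeSubtypeEquivSubtypeInter (· ∈ S) (· ∈ T), fun _ _ => Iff.rfl⟩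

theorem component_diso_of_mem {G : Dgraph V} {x v : V} (h : x ∈ G.compSet v) :
    DIso (G.component x) (G.induce (G.compSet v)) :=
  induce_diso_induce (compSet_eq_of_mem h) fun _ _ _ _ => Iff.rfl

theorem switchedComponent_diso_of_mem {G : Dgraph V} {x v : V} (h : x ∈ G.compSet v) :
    DIso (G.switchedComponent x) ((G.induce (G.compSet v)).switchV ⟨x, h⟩) :=
  G.induce_switchV_diso_of_eq (compSet_eq_of_mem h) _ h

theorem component_switchV_diso_of_mem (G : Dgraph V) {z x : V} (hx : x ∈ G.compSet z) :
    DIso ((G.switchV z).component x) (G.switchedComponent z) := by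
  refine (induce_diso_induce ((compSet_switchV G z x).trans (compSet_eq_of_mem hx))
    fun _ _ _ _ => Iff.rfl).trans ⟨Equiv.refl _, fun a b => ?_⟩
  simp only [switchV, switchedComponent, component, induce, Subtype.ext_iff, Equiv.refl_apply]

theorem component_switchV_diso_of_not_mem (G : Dgraph V) {z x : V} (hx : x ∉ G.compSet z) :
    DIso ((G.switchV z).component x) (G.component x) := by
  refine induce_diso_induce (compSet_switchV G z x) fun p hp q hq => ?_
  rw [compSet_switchV] at hp hq
  have hne : ∀ c ∈ G.compSet x, c ≠ z := by
    rintro c hc rfl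
    exact hx hc.symm
  exact switchV_adj_of_ne (hne p hp) (hne q hq)

def sum (G : Dgraph V) (H : Dgraph W) : Dgraph (V ⊕ W) := ⟨Sum.LiftRel G.Adj H.Adj⟩

theorem DIso.sum {G : Dgraph V} {G' : Dgraph W} {H : Dgraph U} {H' : Dgraph U'}
    (hG : DIso G G') (hH : DIso H H') : DIso (G.sum H) (G'.sum H') := by
  obtain ⟨e, he⟩ := hG
  obtain ⟨f, hf⟩ := hH
  exact ⟨e.sumCongr f, by rintro (a | a) (b | b) <;> simp [Dgraph.sum, he, hf]⟩

theorem sum_induce_compl_diso {G : Dgraph V} {S : Set V} (hS : G.IsUnionOfComponents S) :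
    DIso ((G.induce S).sum (G.induce Sᶜ)) G := by
  classical
  refine ⟨Equiv.Set.sumCompl S, ?_⟩
  rintro (⟨a, ha⟩ | ⟨a, ha⟩) (⟨b, hb⟩ | ⟨b, hb⟩)
  · simp [Dgraph.sum, induce]
  · simpa [Dgraph.sum] using fun h => hb ((hS a b h).mp ha)
  · simpa [Dgraph.sum] using fun h => ha ((hS a b h).mpr hb)
  · simp [Dgraph.sum, induce]

theorem diso_of_induce_of_induce_compl {G : Dgraph V} {H : Dgraph W} {S : Set V} {T : Set W}
    (hS : G.IsUnionOfComponents S) (hT : H.IsUnionOfComponents T)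
    (h : DIso (G.induce S) (H.induce T)) (hc : DIso (G.induce Sᶜ) (H.induce Tᶜ)) : DIso G H :=
  (sum_induce_compl_diso hS).symm.trans ((h.sum hc).trans (sum_induce_compl_diso hT))

theorem diso_of_swap {G H : Dgraph V} {S T : Set V} (hST : Disjoint S T)
    (hGS : G.IsUnionOfComponents S) (hGT : G.IsUnionOfComponents T)
    (hHS : H.IsUnionOfComponents S) (hHT : H.IsUnionOfComponents T)
    (hS : DIso (G.induce S) (H.induce T)) (hT : DIso (G.induce T) (H.induce S))
    (hout : ∀ p ∈ Sᶜ ∩ Tᶜ, ∀ q ∈ Sᶜ ∩ Tᶜ, G.Adj p q ↔ H.Adj p q) : DIso G H := by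
  refine diso_of_induce_of_induce_compl hGS hHT hS ?_
  refine diso_of_induce_of_induce_compl (S := Subtype.val ⁻¹' T) (T := Subtype.val ⁻¹' S)
    (fun p q h => hGT p q h) (fun p q h => hHS p q h) ?_ ?_
  · have hGT' : DIso (G.induce (Sᶜ ∩ T)) (G.induce T) :=
      induce_diso_induce (Set.inter_eq_right.mpr hST.subset_compl_left) fun _ _ _ _ => Iff.rfl
    have hHS' : DIso (H.induce (Tᶜ ∩ S)) (H.induce S) :=
      induce_diso_induce (Set.inter_eq_right.mpr hST.subset_compl_right) fun _ _ _ _ => Iff.rfl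
    exact ((G.induce_induce_diso _ _).trans hGT').trans
      (hT.trans (hHS'.symm.trans (H.induce_induce_diso _ _).symm))
  · exact (G.induce_induce_diso Sᶜ Tᶜ).trans
      ((induce_diso_induce (Set.inter_comm _ _) hout).trans (H.induce_induce_diso Tᶜ Sᶜ).symm)

open Classical in
noncomputable def isoIndicator (G : Dgraph V) (H : Dgraph W) : ℕ := if DIso G H then 1 else 0

theorem isoIndicator_of_diso {G : Dgraph V} {H : Dgraph W} (h : DIso G H) :
    isoIndicator G H = 1 :=
  if_pos h

theorem isoIndicator_of_not_diso {G : Dgraph V} {H : Dgraph W} (h : ¬DIso G H) :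
    isoIndicator G H = 0 :=
  if_neg h

theorem isoIndicator_congr_left {G : Dgraph V} {G' : Dgraph W} (h : DIso G G') (X : Dgraph U) :
    isoIndicator G X = isoIndicator G' X := by
  unfold isoIndicator
  congr 1
  exact propext ⟨h.symm.trans, h.trans⟩

theorem card_mul_isoIndicator_le (G : Dgraph V) (H : Dgraph W) :
    Nat.card V * isoIndicator G H ≤ Nat.card W := by
  by_cases h : DIso G H
  · simp [isoIndicator_of_diso h, h.card_eq]
  · simp [isoIndicator_of_not_diso h]

noncomputable def compVertexCount [Fintype V] (X : Dgraph W) (G : Dgraph V) : ℕ :=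
  ∑ x, isoIndicator (G.component x) X

theorem compVertexCount_congr [Fintype V] [Fintype W] (X : Dgraph U) {G : Dgraph V}
    {H : Dgraph W} (h : DIso G H) : compVertexCount X G = compVertexCount X H := by
  obtain ⟨e, he⟩ := h
  exact Fintype.sum_equiv e _ _ fun x => isoIndicator_congr_left (component_diso_of_equiv e he x) X

theorem compVertexCount_switchV [Fintype V] (X : Dgraph W) (G : Dgraph V) (z : V) :
    compVertexCount X (G.switchV z) + Nat.card (G.compSet z) * isoIndicator (G.component z) X
      = compVertexCount X G
        + Nat.card (G.compSet z) * isoIndicator (G.switchedComponent z) X := by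
  classical
  have split : ∀ (H : Dgraph V) (D : Dgraph (G.compSet z)),
      (∀ x ∈ G.compSet z, DIso (H.component x) D) →
      (∀ x ∉ G.compSet z, DIso (H.component x) (G.component x)) →
      compVertexCount X H = Nat.card (G.compSet z) * isoIndicator D X
        + ∑ x ∈ Finset.univ.filter (· ∉ G.compSet z), isoIndicator (G.component x) X := by
    intro H D hin hout
    rw [compVertexCount, ← Finset.sum_filter_add_sum_filter_not Finset.univ (· ∈ G.compSet z)]
    congr 1
    · rw [Finset.sum_congr rfl fun x hx => isoIndicator_congr_left (hin x (by simpa using hx)) X,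
        Finset.sum_const, smul_eq_mul, Nat.card_eq_fintype_card, Fintype.card_subtype]
    · exact Finset.sum_congr rfl fun x hx =>
        isoIndicator_congr_left (hout x (by simpa using hx)) X
  rw [split (G.switchV z) (G.switchedComponent z) (fun _ hx => G.component_switchV_diso_of_mem hx)
      (fun _ hx => G.component_switchV_diso_of_not_mem hx),
    split G (G.component z) (fun _ hx => component_diso_of_mem hx) (fun _ _ => DIso.refl _)]
  ring

theorem compVertexCount_switchV_switchV [Fintype V] (X : Dgraph W) (G : Dgraph V) (v z : V) :
    compVertexCount X ((G.switchV v).switchV z)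
      + Nat.card (G.compSet v) * isoIndicator (G.component v) X
      + Nat.card (G.compSet z) * isoIndicator ((G.switchV v).component z) X
    = compVertexCount X G + Nat.card (G.compSet v) * isoIndicator (G.switchedComponent v) X
      + Nat.card (G.compSet z) * isoIndicator ((G.switchV v).switchedComponent z) X := by
  have hv := compVertexCount_switchV X G v
  have hz := compVertexCount_switchV X (G.switchV v) z
  rw [card_compSet_switchV] at hz
  omega

theorem switchedComponent_diso_and_component_diso [Fintype V] {G : Dgraph V} {a b z z' : V}
    (hniso : ¬DIso (G.component a) (G.component b))
    (hab : DIso (G.switchedComponent a) (G.component b))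
    (hba : DIso (G.switchedComponent b) (G.component a))
    (h : DIso ((G.switchV a).switchV z) ((G.switchV b).switchV z')) :
    DIso ((G.switchV a).switchedComponent z) (G.component a) ∧
      DIso ((G.switchV a).component z) (G.component b) := by
  have hcard : Nat.card (G.compSet a) = Nat.card (G.compSet b) := hab.card_eq
  have : Nonempty (G.compSet a) := ⟨⟨a, G.mem_compSet_self a⟩⟩
  have hpos : 0 < Nat.card (G.compSet a) := Nat.card_pos
  have hA : isoIndicator (G.component a) (G.component a) = 1 := isoIndicator_of_diso (.refl _)
  have hB : isoIndicator (G.component b) (G.component b) = 1 := isoIndicator_of_diso (.refl _)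
  have hAB : isoIndicator (G.component a) (G.component b) = 0 := isoIndicator_of_not_diso hniso
  have hBA : isoIndicator (G.component b) (G.component a) = 0 :=
    isoIndicator_of_not_diso fun h => hniso h.symm
  constructor
  · -- Otherwise `(G_a)_z` has at most `c - |A|` vertices in components `≅ A`, where `c` counts
    -- them in `G`, while `(G_b)_z'` has at least `c`.
    by_contra h1
    have ha := compVertexCount_switchV_switchV (G.component a) G a z
    have hb := compVertexCount_switchV_switchV (G.component a) G b z'
    have hle := card_mul_isoIndicator_le ((G.switchV b).component z') (G.component a)
    simp only [isoIndicator_congr_left hab, isoIndicator_congr_left hba, hA, hBA,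
      isoIndicator_of_not_diso h1] at ha hb
    rw [card_compSet_switchV] at hle
    have := compVertexCount_congr (G.component a) h
    omega
  · -- Otherwise `(G_a)_z` has at least `c + |B|` vertices in components `≅ B`, while `(G_b)_z'`
    -- has at most `c`.
    by_contra h2
    have ha := compVertexCount_switchV_switchV (G.component b) G a z
    have hb := compVertexCount_switchV_switchV (G.component b) G b z'
    have hle := card_mul_isoIndicator_le ((G.switchV b).switchedComponent z') (G.component b)
    simp only [isoIndicator_congr_left hab, isoIndicator_congr_left hba, hB, hAB,
      isoIndicator_of_not_diso h2] at ha hb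
    rw [card_compSet_switchV] at hle
    have := compVertexCount_congr (G.component b) h
    omega

theorem switchV_switchV_adj_of_ne {G : Dgraph V} {v z p q : V} (hpv : p ≠ v) (hpz : p ≠ z)
    (hqv : q ≠ v) (hqz : q ≠ z) : ((G.switchV v).switchV z).Adj p q ↔ G.Adj p q :=
  (switchV_adj_of_ne hpz hqz).trans (switchV_adj_of_ne hpv hqv)

theorem switchV_switchV_diso {G : Dgraph V} {a b z : V}
    (hab : DIso (G.switchedComponent a) (G.component b))
    (h1 : DIso ((G.switchV a).switchedComponent z) (G.component a))
    (h2 : DIso ((G.switchV a).component z) (G.component b)) :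
    DIso ((G.switchV a).switchV z) G := by
  set K := (G.switchV a).switchV z
  have hK : ∀ x, K.compSet x = G.compSet x := by simp [K]
  have hKunion : ∀ x, K.IsUnionOfComponents (G.compSet x) := fun x =>
    hK x ▸ K.isUnionOfComponents_compSet x
  have hne : ∀ {p x y : V}, y ∈ G.compSet x → p ∉ G.compSet x → p ≠ y := fun hy hp h =>
    hp (h ▸ hy)
  have hKz : DIso (K.induce (G.compSet z)) (G.component a) :=
    (induce_diso_induce (hK z).symm fun _ _ _ _ => Iff.rfl).trans
      (((G.switchV a).component_switchV_diso_of_mem ((G.switchV a).mem_compSet_self z)).trans h1)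
  by_cases hz : z ∈ G.compSet a
  · refine diso_of_induce_of_induce_compl (hKunion z) (G.isUnionOfComponents_compSet z)
      (hKz.trans (component_diso_of_mem hz.symm)) (induce_diso_induce rfl fun p hp q hq => ?_)
    exact switchV_switchV_adj_of_ne (hne hz.symm hp) (hne (G.mem_compSet_self z) hp)
      (hne hz.symm hq) (hne (G.mem_compSet_self z) hq)
  · refine diso_of_swap (disjoint_compSet hz) (hKunion a) (hKunion z)
      (G.isUnionOfComponents_compSet a) (G.isUnionOfComponents_compSet z) ?_ hKz
      fun p hp q hq => ?_
    · calc DIso (K.induce (G.compSet a)) (K.component a) :=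
            induce_diso_induce (hK a).symm fun _ _ _ _ => Iff.rfl
        DIso _ ((G.switchV a).component a) :=
            (G.switchV a).component_switchV_diso_of_not_mem (by simpa using fun h => hz h.symm)
        DIso _ (G.switchedComponent a) := G.component_switchV_diso_of_mem (G.mem_compSet_self a)
        DIso _ (G.component b) := hab
        DIso _ ((G.switchV a).component z) := h2.symm
        DIso _ (G.component z) := G.component_switchV_diso_of_not_mem hz
    · exact switchV_switchV_adj_of_ne (hne (G.mem_compSet_self a) hp.1)
        (hne (G.mem_compSet_self z) hp.2) (hne (G.mem_compSet_self a) hq.1)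
        (hne (G.mem_compSet_self z) hq.2)

theorem exists_diso_switchV_switchV_of_deck_eq [Fintype V] {G H : Dgraph V}
    (hdeck : H.deck = G.deck) (v : V) : ∃ z, DIso H ((G.switchV v).switchV z) := by
  have hmem : Quotient.mk (isoSetoid V) (G.switchV v) ∈ H.deck :=
    hdeck ▸ Multiset.mem_map_of_mem _ (Finset.mem_univ_val v)
  obtain ⟨x, -, hx⟩ := Multiset.mem_map.mp hmem
  obtain ⟨e, he⟩ : DIso (H.switchV x) (G.switchV v) := Quotient.exact hx
  exact ⟨e x, by simpa using diso_switchV_of_equiv e he x⟩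

theorem diso_of_deck_eq_of_switchedComponent_diso [Fintype V] {G H : Dgraph V} {a b : V}
    (hniso : ¬DIso (G.component a) (G.component b))
    (hab : DIso (G.switchedComponent a) (G.component b))
    (hba : DIso (G.switchedComponent b) (G.component a)) (hdeck : H.deck = G.deck) :
    DIso H G := by
  obtain ⟨z, hz⟩ := exists_diso_switchV_switchV_of_deck_eq hdeck a
  obtain ⟨z', hz'⟩ := exists_diso_switchV_switchV_of_deck_eq hdeck b
  obtain ⟨h1, h2⟩ := switchedComponent_diso_and_component_diso hniso hab hba (hz.symm.trans hz')
  exact hz.trans (switchV_switchV_diso hab h1 h2)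

end Dgraph

open Dgraph in
theorem reconstructible_of_switching_adjacent_general {V : Type*} [Fintype V] (G : Dgraph V)
    (u w : V)
    (hniso : ¬ DIso (G.induce (G.compSet u)) (G.induce (G.compSet w)))
    (hadj : ∃ a : G.compSet u,
      DIso ((G.induce (G.compSet u)).switchV a) (G.induce (G.compSet w))) :
    ∀ H : Dgraph V, H.deck = G.deck → DIso H G := by
  obtain ⟨a, hA⟩ := hadj
  obtain ⟨b, hB⟩ := exists_switchV_diso_of_switchV_diso hA
  have ha : DIso (G.component a) (G.induce (G.compSet u)) := component_diso_of_mem a.2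
  have hb : DIso (G.component b) (G.induce (G.compSet w)) := component_diso_of_mem b.2
  intro H hdeck
  refine diso_of_deck_eq_of_switchedComponent_diso (a := a) (b := b) ?_ ?_ ?_ hdeck
  · exact fun h => hniso ((ha.symm.trans h).trans hb)
  · exact ((switchedComponent_diso_of_mem a.2).trans hA).trans hb.symm
  · exact ((switchedComponent_diso_of_mem b.2).trans hB).trans ha.symm

open Dgraph in
/-- If a digraph contains two non-isomorphic switching adjacent components, then it is
reconstructible from its deck. -/
theorem reconstructible_of_switching_adjacent {V : Type*} [Fintype V] (G : Dgraph V)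
    (u w : V) (hdiff : ¬ G.underlying.Reachable u w)
    (hniso : ¬ DIso (G.induce (G.compSet u)) (G.induce (G.compSet w)))
    (hadj : ∃ a : G.compSet u,
      DIso ((G.induce (G.compSet u)).switchV a) (G.induce (G.compSet w))) :
    ∀ H : Dgraph V, H.deck = G.deck → DIso H G :=
  reconstructible_of_switching_adjacent_general G u w hniso hadj
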